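/- arXiv:2005.02478 — 2 statements merged into one kernel-verified Lean document; each statement's English description precedes it below -/
import Mathlib

section
/- Let s₂,…,s_{m-1} ∈ F_q \ {0,1} and t be such that all relevant sumsets avoid wraparound. Define A₀ = Σⱼ (1/(1-sⱼ))·[t] and A₁ = Σⱼ (1/sⱼ)·[t] as sumsets in F_q. Then for each i ∈ {2,…,m-1}, the set (1-sᵢ)·A₀ + sᵢ·A₁ is contained in {2,…,2t} + Σ_{j≠i} ((1-sᵢ)/(1-sⱼ))·[t] + Σ_{j≠i} (sᵢ/sⱼ)·[t], and hence has cardinality at most 2t·t^{2(m-4)+2} = 2t^{2m-5}. -/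
/-!
Expanding `(1 - sᵢ) • A₀ + sᵢ • A₁` coordinatewise, the `i`-th summands become
`(1 - sᵢ) (1 - sᵢ)⁻¹ [t] + sᵢ sᵢ⁻¹ [t] = [t] + [t] ⊆ {2, …, 2t}`, while every other coordinate
contributes a dilate of `[t]`. So one factor `t²` of the trivial product bound collapses to `2t`.
-/

open Finset Pointwise

section DilatedSumset

variable {K ι : Type*} [Field K] [Fintype ι] [DecidableEq ι]

/-- `∑ j ∈ S, c j • [t]`, with `[t] = {1, …, t}` parametrised by `Fin t` via `a ↦ a + 1`. -/
def dilatedSumset [DecidableEq K] (t : ℕ) (c : ι → K) (S : Finset ι) : Finset K :=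
  (univ : Finset (ι → Fin t)).image fun a => ∑ j ∈ S, c j * (((a j : ℕ) + 1 : ℕ) : K)

lemma card_dilatedSumset_le [DecidableEq K] (t : ℕ) (c : ι → K) (S : Finset ι) :
    (dilatedSumset t c S).card ≤ t ^ S.card := by
  have hfactor : dilatedSumset t c S = ((univ : Finset (ι → Fin t)).image
      fun a (j : S) => a j).image fun b => ∑ j ∈ S.attach, c j * (((b j : ℕ) + 1 : ℕ) : K) := by
    rw [dilatedSumset, image_image]
    exact image_congr fun a _ => (sum_attach S fun j => c j * (((a j : ℕ) + 1 : ℕ) : K)).symm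
  calc (dilatedSumset t c S).card
      ≤ ((univ : Finset (ι → Fin t)).image fun a (j : S) => a j).card := by
        rw [hfactor]; exact card_image_le
    _ ≤ (univ : Finset (S → Fin t)).card := card_le_univ _
    _ = t ^ S.card := by simp

lemma mul_sum_inv_mul_eq_add_sum_erase {d x : ι → K} {i : ι} (hd : d i ≠ 0) :
    d i * ∑ j, (d j)⁻¹ * x j = x i + ∑ j ∈ univ.erase i, d i / d j * x j := by
  rw [mul_sum, ← add_sum_erase _ _ (mem_univ i), ← mul_assoc, mul_inv_cancel₀ hd, one_mul]
  exact congrArg _ (sum_congr rfl fun j _ => by rw [div_eq_mul_inv, mul_assoc])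

lemma smul_dilatedSumset_add_smul_dilatedSumset_subset [DecidableEq K] (t : ℕ) {d e : ι → K} {i : ι}
    (hd : d i ≠ 0) (he : e i ≠ 0) :
    d i • dilatedSumset t (fun j => (d j)⁻¹) univ + e i • dilatedSumset t (fun j => (e j)⁻¹) univ
      ⊆ (Icc 2 (2 * t)).image (fun n : ℕ => (n : K))
        + dilatedSumset t (fun j => d i / d j) (univ.erase i)
        + dilatedSumset t (fun j => e i / e j) (univ.erase i) := by
  intro x hx
  obtain ⟨_, ⟨_, ⟨a, -, rfl⟩, rfl⟩, _, ⟨_, ⟨b, -, rfl⟩, rfl⟩, rfl⟩ :=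
    by simpa only [mem_add, mem_smul_finset, dilatedSumset, mem_image] using hx
  simp only [smul_eq_mul, mul_sum_inv_mul_eq_add_sum_erase hd,
    mul_sum_inv_mul_eq_add_sum_erase he]
  have hdiag : ((((a i : ℕ) + 1 : ℕ) : K) + (((b i : ℕ) + 1 : ℕ) : K))
      ∈ (Icc 2 (2 * t)).image (fun n : ℕ => (n : K)) :=
    mem_image.mpr ⟨(a i + 1) + (b i + 1), mem_Icc.mpr ⟨by omega, by omega⟩, by push_cast; rfl⟩
  rw [add_add_add_comm, ← add_assoc]
  exact add_mem_add (add_mem_add hdiag (mem_image_of_mem _ (mem_univ a)))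
    (mem_image_of_mem _ (mem_univ b))

lemma card_smul_dilatedSumset_add_smul_dilatedSumset_le [DecidableEq K] (t : ℕ) {d e : ι → K} {i : ι}
    (hd : d i ≠ 0) (he : e i ≠ 0) :
    (d i • dilatedSumset t (fun j => (d j)⁻¹) univ
      + e i • dilatedSumset t (fun j => (e j)⁻¹) univ).card
      ≤ 2 * t * t ^ (2 * (Fintype.card ι - 1)) := by
  have hdiag : ((Icc 2 (2 * t)).image (fun n : ℕ => (n : K))).card ≤ 2 * t :=
    card_image_le.trans (by rw [Nat.card_Icc]; omega)
  have hoff (c : ι → K) : (dilatedSumset t c (univ.erase i)).card ≤ t ^ (Fintype.card ι - 1) := by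
    simpa [card_erase_of_mem] using card_dilatedSumset_le t c (univ.erase i)
  calc _ ≤ _ := card_le_card (smul_dilatedSumset_add_smul_dilatedSumset_subset t hd he)
    _ ≤ _ := card_add_le.trans (Nat.mul_le_mul_right _ card_add_le)
    _ ≤ 2 * t * t ^ (Fintype.card ι - 1) * t ^ (Fintype.card ι - 1) :=
        Nat.mul_le_mul (Nat.mul_le_mul hdiag (hoff _)) (hoff _)
    _ = 2 * t * t ^ (2 * (Fintype.card ι - 1)) := by ring

end DilatedSumset

theorem evaluation_lists_small_general
    (q : ℕ) [Fact q.Prime] (m t : ℕ)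
    (s : Fin (m - 2) → ZMod q) (hs0 : ∀ i, s i ≠ 0) (hs1 : ∀ i, s i ≠ 1) :
    ∀ i : Fin (m - 2),
      ((1 - s i) • ((Finset.univ : Finset (Fin (m - 2) → Fin t)).image
          (fun a => ∑ j, (1 - s j)⁻¹ * (((a j : ℕ) + 1 : ℕ) : ZMod q)))
        + (s i) • ((Finset.univ : Finset (Fin (m - 2) → Fin t)).image
          (fun a => ∑ j, (s j)⁻¹ * (((a j : ℕ) + 1 : ℕ) : ZMod q)))
        ⊆ (Finset.Icc 2 (2 * t)).image (fun j : ℕ => (j : ZMod q))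
          + ((Finset.univ : Finset (Fin (m - 2) → Fin t)).image
              (fun a => ∑ j ∈ Finset.univ.erase i,
                ((1 - s i) / (1 - s j)) * (((a j : ℕ) + 1 : ℕ) : ZMod q)))
          + ((Finset.univ : Finset (Fin (m - 2) → Fin t)).image
              (fun a => ∑ j ∈ Finset.univ.erase i,
                (s i / s j) * (((a j : ℕ) + 1 : ℕ) : ZMod q))))
      ∧ ((1 - s i) • ((Finset.univ : Finset (Fin (m - 2) → Fin t)).image
            (fun a => ∑ j, (1 - s j)⁻¹ * (((a j : ℕ) + 1 : ℕ) : ZMod q)))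
          + (s i) • ((Finset.univ : Finset (Fin (m - 2) → Fin t)).image
            (fun a => ∑ j, (s j)⁻¹ * (((a j : ℕ) + 1 : ℕ) : ZMod q)))).card
        ≤ 2 * t ^ (2 * m - 5) := by
  intro i
  have h1i : 1 - s i ≠ 0 := sub_ne_zero_of_ne (hs1 i).symm
  refine ⟨smul_dilatedSumset_add_smul_dilatedSumset_subset (d := fun j => 1 - s j) t h1i (hs0 i),
    (card_smul_dilatedSumset_add_smul_dilatedSumset_le (d := fun j => 1 - s j) t h1i (hs0 i)).trans
      (le_of_eq ?_)⟩
  have hexp : 2 * m - 5 = 1 + 2 * (m - 2 - 1) := by have := i.2; omega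
  rw [Fintype.card_fin, hexp, pow_add]
  ring

theorem evaluation_lists_small
    (q : ℕ) [Fact q.Prime] (m t : ℕ) (hm : 3 ≤ m) (ht : 0 < t) (htq : 2 * t < q)
    (s : Fin (m - 2) → ZMod q) (hs0 : ∀ i, s i ≠ 0) (hs1 : ∀ i, s i ≠ 1) :
    ∀ i : Fin (m - 2),
      ((1 - s i) • ((Finset.univ : Finset (Fin (m - 2) → Fin t)).image
          (fun a => ∑ j, (1 - s j)⁻¹ * (((a j : ℕ) + 1 : ℕ) : ZMod q)))
        + (s i) • ((Finset.univ : Finset (Fin (m - 2) → Fin t)).image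
          (fun a => ∑ j, (s j)⁻¹ * (((a j : ℕ) + 1 : ℕ) : ZMod q)))
        ⊆ (Finset.Icc 2 (2 * t)).image (fun j : ℕ => (j : ZMod q))
          + ((Finset.univ : Finset (Fin (m - 2) → Fin t)).image
              (fun a => ∑ j ∈ Finset.univ.erase i,
                ((1 - s i) / (1 - s j)) * (((a j : ℕ) + 1 : ℕ) : ZMod q)))
          + ((Finset.univ : Finset (Fin (m - 2) → Fin t)).image
              (fun a => ∑ j ∈ Finset.univ.erase i,
                (s i / s j) * (((a j : ℕ) + 1 : ℕ) : ZMod q))))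
      ∧ ((1 - s i) • ((Finset.univ : Finset (Fin (m - 2) → Fin t)).image
            (fun a => ∑ j, (1 - s j)⁻¹ * (((a j : ℕ) + 1 : ℕ) : ZMod q)))
          + (s i) • ((Finset.univ : Finset (Fin (m - 2) → Fin t)).image
            (fun a => ∑ j, (s j)⁻¹ * (((a j : ℕ) + 1 : ℕ) : ZMod q)))).card
        ≤ 2 * t ^ (2 * m - 5) :=
  evaluation_lists_small_general q m t s hs0 hs1
end

section
/- Let C ⊆ [q]^n be a code with minimum Hamming distance at least n(1-ε) for some ε ∈ (0,1), let ρ ∈ [0,1), and let ℓ be a positive integer with ε·ℓ < (1-ρ)². Then C is (ρ, ℓ, L)-list recoverable with L = ℓ / ((1-ρ)² - ε·ℓ). -/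
open Finset

theorem johnson_bound_list_recovery
    (q n ℓ : ℕ) (hq : 0 < q) (hn : 0 < n) (hℓ : 0 < ℓ)
    (ε ρ : ℝ) (hε0 : 0 < ε) (hε1 : ε < 1) (hρ0 : 0 ≤ ρ) (hρ1 : ρ < 1)
    (hεℓ : ε * ℓ < (1 - ρ)^2)
    (C : Finset (Fin n → Fin q))
    (hdist : ∀ c₁ ∈ C, ∀ c₂ ∈ C, c₁ ≠ c₂ →
      (((Finset.univ.filter (fun i : Fin n => c₁ i = c₂ i)).card : ℝ) ≤ ε * n)) :
    ∀ A : Fin n → Finset (Fin q), (∀ i, (A i).card ≤ ℓ) →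
      ((C.filter (fun c =>
          ((Finset.univ.filter (fun i => c i ∉ A i)).card : ℝ) ≤ ρ * n)).card : ℝ)
        ≤ (ℓ : ℝ) / ((1 - ρ)^2 - ε * ℓ) := by
  intro A hA
  set S := C.filter (fun c =>
      ((Finset.univ.filter (fun i => c i ∉ A i)).card : ℝ) ≤ ρ * n) with hSdef
  set M : ℝ := (S.card : ℝ) with hMdef
  have hM0 : 0 ≤ M := Nat.cast_nonneg _
  have hSsubC : S ⊆ C := Finset.filter_subset _ _
  set N : Fin n → Fin q → ℝ :=
    fun i a => ((S.filter (fun c => c i = a)).card : ℝ) with hNdef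
  have hNsum : ∀ i a, N i a = ∑ c ∈ S, (if c i = a then (1:ℝ) else 0) := by
    intro i a
    rw [Finset.sum_boole]
  -- T = ∑ i, ∑ a ∈ A i, N i a equals ∑ c ∈ S, #{i : c i ∈ A i}
  have h1 : ∀ i, ∑ a ∈ A i, N i a
      = ∑ c ∈ S, (if c i ∈ A i then (1:ℝ) else 0) := by
    intro i
    simp only [hNsum]
    rw [Finset.sum_comm]
    refine Finset.sum_congr rfl fun c _ => ?_
    rw [Finset.sum_ite_eq]
  have hT : ∑ i, ∑ a ∈ A i, N i a
      = ∑ c ∈ S, ((Finset.univ.filter (fun i => c i ∈ A i)).card : ℝ) := by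
    simp only [h1]
    rw [Finset.sum_comm]
    refine Finset.sum_congr rfl fun c _ => ?_
    rw [Finset.sum_boole]
  -- lower bound on T
  have hTlb : (1 - ρ) * n * M ≤ ∑ i, ∑ a ∈ A i, N i a := by
    rw [hT]
    have hlb : ∀ c ∈ S, (1 - ρ) * n
        ≤ ((Finset.univ.filter (fun i => c i ∈ A i)).card : ℝ) := by
      intro c hc
      have hc' := (Finset.mem_filter.mp hc).2
      have hsplit : (Finset.univ.filter (fun i => c i ∈ A i)).card
          + (Finset.univ.filter (fun i => ¬ (c i ∈ A i))).card = n := by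
        rw [Finset.card_filter_add_card_filter_not]
        simp
      have heq : ((Finset.univ.filter (fun i => c i ∈ A i)).card : ℝ)
          = n - ((Finset.univ.filter (fun i => c i ∉ A i)).card : ℝ) := by
        have := hsplit
        push_cast [← this]
        ring
      rw [heq]
      linarith
    have := Finset.card_nsmul_le_sum S _ _ hlb
    calc (1 - ρ) * n * M = S.card • ((1 - ρ) * (n:ℝ)) := by
          rw [nsmul_eq_mul]; ring
      _ ≤ _ := this
  have hTnn : 0 ≤ (1 - ρ) * n * M := by
    have : (0:ℝ) ≤ n := Nat.cast_nonneg _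
    have h1ρ : 0 ≤ 1 - ρ := by linarith
    positivity
  -- Cauchy-Schwarz
  have hCS : (∑ i, ∑ a ∈ A i, N i a)^2
      ≤ ((n:ℝ) * ℓ) * ∑ i, ∑ a : Fin q, (N i a)^2 := by
    have hstepA : ∀ i, (∑ a ∈ A i, N i a)^2 ≤ (ℓ:ℝ) * ∑ a : Fin q, (N i a)^2 := by
      intro i
      have h := Finset.sum_mul_sq_le_sq_mul_sq (A i) (fun _ => (1:ℝ)) (N i)
      simp only [one_mul, one_pow] at h
      have hsub : ∑ a ∈ A i, (N i a)^2 ≤ ∑ a : Fin q, (N i a)^2 := by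
        apply Finset.sum_le_sum_of_subset_of_nonneg (Finset.subset_univ _)
        intro a _ _
        positivity
      have hcard : (∑ _a ∈ A i, (1:ℝ)) ≤ (ℓ:ℝ) := by
        rw [Finset.sum_const, nsmul_eq_mul, mul_one]
        exact_mod_cast hA i
      have hnn : 0 ≤ ∑ a ∈ A i, (N i a)^2 := Finset.sum_nonneg fun a _ => sq_nonneg _
      calc (∑ a ∈ A i, N i a)^2 ≤ (∑ _a ∈ A i, (1:ℝ)) * ∑ a ∈ A i, (N i a)^2 := h
        _ ≤ (ℓ:ℝ) * ∑ a ∈ A i, (N i a)^2 := by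
            apply mul_le_mul_of_nonneg_right hcard hnn
        _ ≤ (ℓ:ℝ) * ∑ a : Fin q, (N i a)^2 := by
            apply mul_le_mul_of_nonneg_left hsub (Nat.cast_nonneg _)
    have hstepB := Finset.sum_mul_sq_le_sq_mul_sq Finset.univ
      (fun _ : Fin n => (1:ℝ)) (fun i => ∑ a ∈ A i, N i a)
    simp only [one_mul, one_pow, Finset.sum_const, Finset.card_univ,
      Fintype.card_fin, nsmul_eq_mul, mul_one] at hstepB
    calc (∑ i, ∑ a ∈ A i, N i a)^2
        ≤ (n:ℝ) * ∑ i, (∑ a ∈ A i, N i a)^2 := hstepB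
      _ ≤ (n:ℝ) * ∑ i, ((ℓ:ℝ) * ∑ a : Fin q, (N i a)^2) := by
          apply mul_le_mul_of_nonneg_left (Finset.sum_le_sum fun i _ => hstepA i)
            (Nat.cast_nonneg _)
      _ = ((n:ℝ) * ℓ) * ∑ i, ∑ a : Fin q, (N i a)^2 := by
          rw [← Finset.mul_sum]; ring
  -- second moment = pairwise agreements
  have hkey : ∀ (x y : Fin q), ∑ a : Fin q,
      (if x = a then (1:ℝ) else 0) * (if y = a then (1:ℝ) else 0)
      = if x = y then (1:ℝ) else 0 := by
    intro x y
    by_cases h : x = y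
    · subst h
      simp [Finset.sum_ite_eq]
    · simp only [if_neg h]
      apply Finset.sum_eq_zero
      intro a _
      by_cases hx : x = a
      · subst hx
        rw [if_pos rfl, if_neg (fun hyx => h hyx.symm), mul_zero]
      · rw [if_neg hx, zero_mul]
  have hSM : ∑ i, ∑ a : Fin q, (N i a)^2
      = ∑ c ∈ S, ∑ c' ∈ S,
        ((Finset.univ.filter (fun j => c j = c' j)).card : ℝ) := by
    have hinner : ∀ i, ∑ a : Fin q, (N i a)^2
        = ∑ c ∈ S, ∑ c' ∈ S, (if c i = c' i then (1:ℝ) else 0) := by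
      intro i
      have : ∀ a, (N i a)^2 = ∑ c ∈ S, ∑ c' ∈ S,
          (if c i = a then (1:ℝ) else 0) * (if c' i = a then (1:ℝ) else 0) := by
        intro a
        rw [hNsum, sq, Finset.sum_mul_sum]
      simp only [this]
      rw [Finset.sum_comm]
      refine Finset.sum_congr rfl fun c _ => ?_
      rw [Finset.sum_comm]
      refine Finset.sum_congr rfl fun c' _ => ?_
      exact hkey (c i) (c' i)
    simp only [hinner]
    rw [Finset.sum_comm]
    refine Finset.sum_congr rfl fun c _ => ?_
    rw [Finset.sum_comm]
    refine Finset.sum_congr rfl fun c' _ => ?_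
    rw [Finset.sum_boole]
  -- upper bound on pairwise agreements
  have hUB : ∑ i, ∑ a : Fin q, (N i a)^2 ≤ M * ((n:ℝ) + ε * n * M) := by
    rw [hSM]
    have hrow : ∀ c ∈ S, ∑ c' ∈ S,
        ((Finset.univ.filter (fun j => c j = c' j)).card : ℝ)
        ≤ (n:ℝ) + ε * n * M := by
      intro c hc
      rw [← Finset.add_sum_erase _ _ hc]
      have hdiag : ((Finset.univ.filter (fun j => c j = c j)).card : ℝ) = n := by
        simp
      have hoff : ∑ c' ∈ S.erase c,
          ((Finset.univ.filter (fun j => c j = c' j)).card : ℝ) ≤ ε * n * M := by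
        have hterm : ∀ c' ∈ S.erase c,
            ((Finset.univ.filter (fun j => c j = c' j)).card : ℝ) ≤ ε * n := by
          intro c' hc'
          have hne : c' ≠ c := (Finset.mem_erase.mp hc').1
          have hc'S : c' ∈ S := (Finset.mem_erase.mp hc').2
          exact hdist c (hSsubC hc) c' (hSsubC hc'S) (Ne.symm hne)
        calc ∑ c' ∈ S.erase c, ((Finset.univ.filter (fun j => c j = c' j)).card : ℝ)
            ≤ (S.erase c).card • (ε * n) := Finset.sum_le_card_nsmul _ _ _ hterm
          _ = ((S.erase c).card : ℝ) * (ε * n) := by rw [nsmul_eq_mul]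
          _ ≤ M * (ε * n) := by
              apply mul_le_mul_of_nonneg_right _ (by positivity)
              rw [hMdef]
              exact_mod_cast Finset.card_le_card (Finset.erase_subset _ _)
          _ = ε * n * M := by ring
      rw [hdiag]
      linarith
    calc ∑ c ∈ S, ∑ c' ∈ S, ((Finset.univ.filter (fun j => c j = c' j)).card : ℝ)
        ≤ S.card • ((n:ℝ) + ε * n * M) := Finset.sum_le_card_nsmul _ _ _ hrow
      _ = M * ((n:ℝ) + ε * n * M) := by rw [nsmul_eq_mul]
  -- final algebra
  have hn' : (0:ℝ) < n := by exact_mod_cast hn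
  have hℓnn : (0:ℝ) ≤ ℓ := Nat.cast_nonneg _
  have hfinal : ((1 - ρ) * n * M)^2 ≤ ((n:ℝ) * ℓ) * (M * ((n:ℝ) + ε * n * M)) := by
    calc ((1 - ρ) * n * M)^2 ≤ (∑ i, ∑ a ∈ A i, N i a)^2 :=
          pow_le_pow_left₀ hTnn hTlb 2
      _ ≤ ((n:ℝ) * ℓ) * ∑ i, ∑ a : Fin q, (N i a)^2 := hCS
      _ ≤ ((n:ℝ) * ℓ) * (M * ((n:ℝ) + ε * n * M)) := by
          apply mul_le_mul_of_nonneg_left hUB (by positivity)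
  have h2 : (1 - ρ)^2 * M^2 ≤ (ℓ:ℝ) * M + ε * ℓ * M^2 := by
    have hsq : (0:ℝ) < (n:ℝ)^2 := by positivity
    have h := hfinal
    have hl : ((1 - ρ) * n * M)^2 = (n:ℝ)^2 * ((1 - ρ)^2 * M^2) := by ring
    have hr : ((n:ℝ) * ℓ) * (M * ((n:ℝ) + ε * n * M))
        = (n:ℝ)^2 * ((ℓ:ℝ) * M + ε * ℓ * M^2) := by ring
    rw [hl, hr] at h
    exact le_of_mul_le_mul_left h hsq
  have hD : 0 < (1 - ρ)^2 - ε * ℓ := by linarith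
  rw [le_div_iff₀ hD]
  rcases eq_or_lt_of_le hM0 with h0 | hpos
  · rw [← h0]
    simp only [← h0, zero_mul]
    exact hℓnn
  · have h3 : M * (M * ((1 - ρ)^2 - ε * ℓ)) ≤ M * ℓ := by
      have he : M * (M * ((1 - ρ)^2 - ε * ℓ))
          = (1 - ρ)^2 * M^2 - ε * ℓ * M^2 := by ring
      have he2 : M * (ℓ:ℝ) = (ℓ:ℝ) * M := by ring
      linarith
    exact le_of_mul_le_mul_left h3 hpos
end
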